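/- Let ν_1, ν_2 be kernels assigning to each x ∈ ℝ Borel measures on (0,∞) with sup_x ∫ min{1,y²} ν_i(x,dy) < ∞ for i = 1,2, and set N_i(x,y) := ν_i(x,(y,∞)). Assume N_1 has a uniformly bigger tail than N_2: there exists y₀ > 0 such that N_1(x,y) ≥ N_2(x,y) for all x ∈ ℝ and all y ≥ y₀. Then: (a) for every ρ > 0, ∫_ρ^∞ ( sup_{x∈ℝ} ∫_0^r y N_1(x,y) dy )^{-1} dr = ∞ implies ∫_ρ^∞ ( sup_{x∈ℝ} ∫_0^r y N_2(x,y) dy )^{-1} dr = ∞; (b) if in addition there exists y₁ > 0 with inf_{x∈ℝ} ∫_{y₁}^∞ y N_1(x,y) dy > 0, then ∫_ρ^∞ ( inf_{x∈ℝ} ∫_0^r y N_2(x,y) dy )^{-1} dr < ∞ for some ρ > 0 implies ∫_ρ^∞ ( inf_{x∈ℝ} ∫_0^r y N_1(x,y) dy )^{-1} dr < ∞ for all sufficiently large ρ > 0. -/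

import Mathlib

/-!
Split `∫_0^r y N₂(x,y) dy` at `y₀`. On `(y₀, r]` the tail comparison bounds it by
`∫_0^r y N₁(x,y) dy`; on `(0, y₀]`, by Tonelli,
`∫_0^{y₀} y N₂(x,y) dy ≤ max(1, y₀²) ∫ min(1, z²) ν₂(x,dz)`, which is bounded uniformly in `x`.
Hence both the supremum and the infimum over `x` satisfy `I₂ ≤ C + I₁` with a finite constant
`C`, and an additive constant does not affect the divergence of `∫ dr / I`: beyond the point where
`I ≥ C` one has `C + I ≤ 2 I`, and if `I` never reaches `C` then `1 / (C + I) ≥ 1 / (2C)`.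
In (a) the case `sup_x ∫_0^ρ y N₁ dy = 0` is special: then every `ν₁(x)` has vanishing tails,
so `I₁ ≡ 0`.
-/

open MeasureTheory Set
open scoped ENNReal

/-- `∫_0^r y N(y) dy` with `N(y) = μ (y, ∞)`. -/
noncomputable def tailIntegral (μ : Measure ℝ) (r : ℝ) : ℝ≥0∞ :=
  ∫⁻ y in Ioc 0 r, ENNReal.ofReal y * μ (Ioi y)

noncomputable def levyIntegral (μ : Measure ℝ) : ℝ≥0∞ :=
  ∫⁻ z in Ioi 0, ENNReal.ofReal (min 1 (z ^ 2)) ∂μ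

section

variable {f S I₁ I₂ : ℝ → ℝ≥0∞} {C : ℝ≥0∞} {a ρ : ℝ}

lemma le_two_mul_of_le_add {x y : ℝ≥0∞} (hC : C ≠ ∞) (hx : 2 * C ≤ x) (hxy : x ≤ C + y) :
    x ≤ 2 * y := by
  rcases eq_or_ne x ∞ with rfl | hx_top
  · have hy : y = ∞ := by simpa [hC] using hxy
    simp [hy]
  · refine ENNReal.le_of_add_le_add_left hx_top ?_
    calc x + x = 2 * x := (two_mul x).symm
      _ ≤ 2 * (C + y) := by gcongr
      _ = 2 * C + 2 * y := mul_add 2 C y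
      _ ≤ x + 2 * y := by gcongr

lemma lintegral_Ioi_eq_top_of_forall_le (hc : C ≠ 0) (h : ∀ r, a < r → C ≤ f r) :
    ∫⁻ r in Ioi a, f r = ∞ := by
  refine top_unique ?_
  calc ∞ = ∫⁻ _ in Ioi a, C := by rw [setLIntegral_const, Real.volume_Ioi, ENNReal.mul_top hc]
    _ ≤ ∫⁻ r in Ioi a, f r := setLIntegral_mono' measurableSet_Ioi h

lemma lintegral_Ioi_inv_eq_top_of_monotone (hS : Monotone S) (hρ : S ρ ≠ 0)
    (hdiv : ∫⁻ r in Ioi ρ, (S r)⁻¹ = ∞) (b : ℝ) : ∫⁻ r in Ioi b, (S r)⁻¹ = ∞ := by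
  have hbounded : ∫⁻ r in Ioc ρ b, (S r)⁻¹ ≠ ∞ := by
    refine ne_top_of_le_ne_top ?_ (setLIntegral_mono' (g := fun _ => (S ρ)⁻¹) measurableSet_Ioc
      fun r hr => ENNReal.inv_le_inv.mpr (hS hr.1.le))
    rw [setLIntegral_const, Real.volume_Ioc]
    exact ENNReal.mul_ne_top (ENNReal.inv_ne_top.mpr hρ) ENNReal.ofReal_ne_top
  have hsplit : ∫⁻ r in Ioi ρ, (S r)⁻¹ ≤ (∫⁻ r in Ioc ρ b, (S r)⁻¹) + ∫⁻ r in Ioi b, (S r)⁻¹ :=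
    (lintegral_mono_set Ioi_subset_Ioc_union_Ioi).trans (lintegral_union_le _ _ _)
  by_contra h
  exact (ENNReal.add_ne_top.mpr ⟨hbounded, h⟩) (top_unique (hdiv ▸ hsplit))

lemma lintegral_Ioi_inv_eq_top_of_le_add (hC : C ≠ ∞) (hI₁ : Monotone I₁)
    (hzero : I₁ ρ = 0 → ∀ r, I₁ r = 0) (hcomp : ∀ r, I₂ r ≤ C + I₁ r)
    (hdiv : ∫⁻ r in Ioi ρ, (I₁ r)⁻¹ = ∞) : ∫⁻ r in Ioi ρ, (I₂ r)⁻¹ = ∞ := by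
  by_cases hlarge : ∃ r₀, ρ ≤ r₀ ∧ C < I₁ r₀
  · obtain ⟨r₀, hρr₀, hCr₀⟩ := hlarge
    have hρ : I₁ ρ ≠ 0 := fun h => by simp [hzero h r₀] at hCr₀
    refine top_unique ?_
    calc ∞ = 2⁻¹ * ∫⁻ r in Ioi r₀, (I₁ r)⁻¹ := by
          rw [lintegral_Ioi_inv_eq_top_of_monotone hI₁ hρ hdiv, ENNReal.mul_top (by simp)]
      _ = ∫⁻ r in Ioi r₀, (2 * I₁ r)⁻¹ := by
          rw [← lintegral_const_mul' _ _ (by simp)]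
          simp_rw [ENNReal.mul_inv (Or.inl two_ne_zero) (Or.inl ENNReal.ofNat_ne_top)]
      _ ≤ ∫⁻ r in Ioi r₀, (I₂ r)⁻¹ := setLIntegral_mono' measurableSet_Ioi fun r hr =>
          ENNReal.inv_le_inv.mpr ((hcomp r).trans
            (by rw [two_mul]; gcongr; exact hCr₀.le.trans (hI₁ hr.le)))
      _ ≤ ∫⁻ r in Ioi ρ, (I₂ r)⁻¹ := lintegral_mono_set (Ioi_subset_Ioi hρr₀)
  · push Not at hlarge
    refine lintegral_Ioi_eq_top_of_forall_le (C := (2 * C)⁻¹)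
      (ENNReal.inv_ne_zero.mpr (ENNReal.mul_ne_top ENNReal.ofNat_ne_top hC)) fun r hr => ?_
    exact ENNReal.inv_le_inv.mpr ((hcomp r).trans
      (by rw [two_mul]; gcongr; exact hlarge r hr.le))

/-- Convergence of `∫ I₂⁻¹` forces `I₂ ≥ 2 C` eventually, and from then on `I₂ ≤ 2 I₁`. -/
lemma exists_lintegral_Ioi_inv_lt_top_of_le_add (hC : C ≠ ∞) (hI₂ : Monotone I₂)
    (hcomp : ∀ r, I₂ r ≤ C + I₁ r) (hρ : 0 < ρ) (hconv : ∫⁻ r in Ioi ρ, (I₂ r)⁻¹ < ∞) :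
    ∃ ρ₀ > (0 : ℝ), ∀ ρ', ρ₀ ≤ ρ' → ∫⁻ r in Ioi ρ', (I₁ r)⁻¹ < ∞ := by
  obtain ⟨r₁, hρr₁, hCr₁⟩ : ∃ r₁, ρ < r₁ ∧ 2 * C ≤ I₂ r₁ := by
    by_contra! hsmall
    exact hconv.ne (lintegral_Ioi_eq_top_of_forall_le (C := (2 * C)⁻¹)
      (ENNReal.inv_ne_zero.mpr (ENNReal.mul_ne_top ENNReal.ofNat_ne_top hC))
      fun r hr => ENNReal.inv_le_inv.mpr (hsmall r hr).le)
  refine ⟨r₁, hρ.trans hρr₁, fun ρ' hρ' => ?_⟩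
  have hpointwise : ∀ r ∈ Ioi ρ', (I₁ r)⁻¹ ≤ 2 * (I₂ r)⁻¹ := fun r hr => by
    have hI : I₂ r ≤ 2 * I₁ r :=
      le_two_mul_of_le_add hC (hCr₁.trans (hI₂ (hρ'.trans hr.le))) (hcomp r)
    calc (I₁ r)⁻¹ ≤ (2⁻¹ * I₂ r)⁻¹ := by
          refine ENNReal.inv_le_inv.mpr ?_
          rwa [ENNReal.inv_mul_le_iff (by simp) (by simp)]
      _ = 2 * (I₂ r)⁻¹ := by
          rw [ENNReal.mul_inv (Or.inl (by simp)) (Or.inl (by simp)), inv_inv]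
  calc ∫⁻ r in Ioi ρ', (I₁ r)⁻¹ ≤ ∫⁻ r in Ioi ρ', 2 * (I₂ r)⁻¹ :=
        setLIntegral_mono' measurableSet_Ioi hpointwise
    _ = 2 * ∫⁻ r in Ioi ρ', (I₂ r)⁻¹ := lintegral_const_mul' _ _ (by simp)
    _ ≤ 2 * ∫⁻ r in Ioi ρ, (I₂ r)⁻¹ := by gcongr; exact hρr₁.le.trans hρ'
    _ < ∞ := ENNReal.mul_lt_top (by simp) hconv

end

lemma lintegral_Ioc_ite_lt_le {r z : ℝ} (hr : 0 ≤ r) (hz : 0 < z) :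
    ∫⁻ y in Ioc 0 r, (if y < z then ENNReal.ofReal y else 0) ≤
      ENNReal.ofReal (max 1 (r ^ 2)) * ENNReal.ofReal (min 1 (z ^ 2)) := by
  set m := min r z
  have hm : 0 ≤ m := le_min hr hz.le
  have hsq : m * m ≤ max 1 (r ^ 2) * min 1 (z ^ 2) := by
    rcases le_or_gt z 1 with hz1 | hz1
    · rw [min_eq_right (by nlinarith)]
      nlinarith [min_le_right r z, le_max_left 1 (r ^ 2), sq_nonneg z]
    · rw [min_eq_left (by nlinarith), mul_one]
      nlinarith [min_le_left r z, le_max_right 1 (r ^ 2)]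
  calc ∫⁻ y in Ioc 0 r, (if y < z then ENNReal.ofReal y else 0)
      ≤ ∫⁻ y in Ioc 0 r, (Ioc 0 m).indicator (fun _ => ENNReal.ofReal m) y := by
        refine setLIntegral_mono' measurableSet_Ioc fun y hy => ?_
        split_ifs with hyz
        · rw [indicator_of_mem (show y ∈ Ioc 0 m from ⟨hy.1, le_min hy.2 hyz.le⟩)]
          exact ENNReal.ofReal_le_ofReal (le_min hy.2 hyz.le)
        · exact zero_le
    _ ≤ ∫⁻ y, (Ioc 0 m).indicator (fun _ => ENNReal.ofReal m) y := setLIntegral_le_lintegral _ _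
    _ = ENNReal.ofReal (m * m) := by
        rw [lintegral_indicator_const measurableSet_Ioc, Real.volume_Ioc, sub_zero,
          ENNReal.ofReal_mul hm]
    _ ≤ _ := by
        rw [← ENNReal.ofReal_mul (zero_le_one.trans (le_max_left _ _))]
        exact ENNReal.ofReal_le_ofReal hsq

lemma sFinite_restrict_Ioi_of_levyIntegral_ne_top {μ : Measure ℝ} (h : levyIntegral μ ≠ ∞) :
    SFinite (μ.restrict (Ioi 0)) := by
  have : IsFiniteMeasure
      ((μ.restrict (Ioi 0)).withDensity fun z => ENNReal.ofReal (min 1 (z ^ 2))) :=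
    isFiniteMeasure_withDensity h
  refine sFinite_of_absolutelyContinuous (withDensity_absolutelyContinuous'
    (f := fun z => ENNReal.ofReal (min 1 (z ^ 2))) (by fun_prop) ?_)
  refine ae_restrict_of_forall_mem measurableSet_Ioi fun z (hz : 0 < z) => ?_
  exact (ENNReal.ofReal_pos.mpr (lt_min one_pos (pow_pos hz 2))).ne'

namespace tailIntegral

variable (μ : Measure ℝ)

lemma monotone : Monotone (tailIntegral μ) :=
  fun _ _ hrs => lintegral_mono_set (Ioc_subset_Ioc_right hrs)

lemma le_levyIntegral {r : ℝ} (hr : 0 ≤ r) :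
    tailIntegral μ r ≤ ENNReal.ofReal (max 1 (r ^ 2)) * levyIntegral μ := by
  by_cases hμ : levyIntegral μ = ∞
  · rw [hμ, ENNReal.mul_top (ENNReal.ofReal_pos.mpr (lt_max_of_lt_left one_pos)).ne']
    exact le_top
  have := sFinite_restrict_Ioi_of_levyIntegral_ne_top hμ
  have hrepr : ∀ y ∈ Ioc (0 : ℝ) r, ENNReal.ofReal y * μ (Ioi y) =
      ∫⁻ z, (if y < z then ENNReal.ofReal y else 0) ∂μ.restrict (Ioi 0) := fun y hy => by
    rw [← Measure.restrict_eq_self (μ := μ) (Ioi_subset_Ioi hy.1.le),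
      ← lintegral_indicator_const measurableSet_Ioi]
    rfl
  have hmeas : Measurable (Function.uncurry fun y z : ℝ => if y < z then ENNReal.ofReal y else 0) :=
    Measurable.ite (measurableSet_lt measurable_fst measurable_snd)
      (ENNReal.measurable_ofReal.comp measurable_fst) measurable_const
  calc tailIntegral μ r
      = ∫⁻ y in Ioc 0 r, ∫⁻ z, (if y < z then ENNReal.ofReal y else 0) ∂μ.restrict (Ioi 0) :=
        setLIntegral_congr_fun measurableSet_Ioc hrepr
    _ = ∫⁻ z in Ioi 0, (∫⁻ y in Ioc 0 r, if y < z then ENNReal.ofReal y else 0) ∂μ :=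
        lintegral_lintegral_swap hmeas.aemeasurable
    _ ≤ ∫⁻ z in Ioi 0, ENNReal.ofReal (max 1 (r ^ 2)) * ENNReal.ofReal (min 1 (z ^ 2)) ∂μ :=
        setLIntegral_mono' measurableSet_Ioi fun z (hz : 0 < z) => lintegral_Ioc_ite_lt_le hr hz
    _ = _ := lintegral_const_mul' _ _ ENNReal.ofReal_ne_top

lemma mul_measure_Ioi_le {t r : ℝ} (htr : t ≤ r) :
    ENNReal.ofReal (t / 2) * ENNReal.ofReal (t / 2) * μ (Ioi t) ≤ tailIntegral μ r := by
  calc ENNReal.ofReal (t / 2) * ENNReal.ofReal (t / 2) * μ (Ioi t)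
      = ∫⁻ _ in Ioc (t / 2) t, ENNReal.ofReal (t / 2) * μ (Ioi t) := by
        rw [setLIntegral_const, Real.volume_Ioc]; ring_nf
    _ ≤ ∫⁻ y in Ioc (t / 2) t, ENNReal.ofReal y * μ (Ioi y) :=
        setLIntegral_mono' measurableSet_Ioc fun y hy =>
          mul_le_mul' (ENNReal.ofReal_le_ofReal hy.1.le) (measure_mono (Ioi_subset_Ioi hy.2))
    _ ≤ tailIntegral μ r := by
        by_cases ht : 0 ≤ t
        · exact lintegral_mono_set (Ioc_subset_Ioc (by linarith) htr)
        · rw [Ioc_eq_empty (by linarith), Measure.restrict_empty, lintegral_zero_measure]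
          exact zero_le

lemma eq_zero_of_apply_eq_zero {r : ℝ} (hr : 0 < r) (h : tailIntegral μ r = 0) :
    tailIntegral μ = 0 := by
  have htail : ∀ t, 0 < t → t ≤ r → μ (Ioi t) = 0 := fun t ht htr => by
    have := (mul_measure_Ioi_le μ htr).trans_eq h
    simpa [(half_pos ht).not_ge] using this
  refine funext fun s => setLIntegral_eq_zero measurableSet_Ioc fun y hy => ?_
  have : μ (Ioi y) = 0 := measure_mono_null (Ioi_subset_Ioi (min_le_left y r))
    (htail _ (lt_min hy.1 hr) (min_le_right y r))
  simp [this]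

lemma le_add_of_measure_Ioi_le {μ₁ μ₂ : Measure ℝ} {a : ℝ} (ha : 0 ≤ a)
    (htail : ∀ y, a ≤ y → μ₂ (Ioi y) ≤ μ₁ (Ioi y)) (r : ℝ) :
    tailIntegral μ₂ r ≤ tailIntegral μ₂ a + tailIntegral μ₁ r :=
  calc tailIntegral μ₂ r
      ≤ tailIntegral μ₂ a + ∫⁻ y in Ioc a r, ENNReal.ofReal y * μ₂ (Ioi y) :=
        (lintegral_mono_set Ioc_subset_Ioc_union_Ioc).trans (lintegral_union_le _ _ _)
    _ ≤ tailIntegral μ₂ a + ∫⁻ y in Ioc a r, ENNReal.ofReal y * μ₁ (Ioi y) :=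
        add_le_add le_rfl (setLIntegral_mono' measurableSet_Ioc fun y hy =>
          mul_le_mul_right (htail y hy.1.le) _)
    _ ≤ tailIntegral μ₂ a + tailIntegral μ₁ r :=
        add_le_add le_rfl (lintegral_mono_set (Ioc_subset_Ioc_left ha))

end tailIntegral

theorem stmt18 (ν₁ ν₂ : ℝ → MeasureTheory.Measure ℝ)
    (hν₂ : (⨆ x, ∫⁻ y in Set.Ioi (0 : ℝ), ENNReal.ofReal (min 1 (y ^ 2)) ∂(ν₂ x)) < ∞)
    (y₀ : ℝ) (hy₀ : 0 < y₀)
    (htail : ∀ x : ℝ, ∀ y : ℝ, y₀ ≤ y → ν₂ x (Set.Ioi y) ≤ ν₁ x (Set.Ioi y)) :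
    -- (a)
    (∀ ρ > (0 : ℝ),
      (∫⁻ r in Set.Ioi ρ,
        (⨆ x, ∫⁻ y in Set.Ioc (0 : ℝ) r, ENNReal.ofReal y * ν₁ x (Set.Ioi y))⁻¹ = ∞) →
      ∫⁻ r in Set.Ioi ρ,
        (⨆ x, ∫⁻ y in Set.Ioc (0 : ℝ) r, ENNReal.ofReal y * ν₂ x (Set.Ioi y))⁻¹ = ∞) ∧
    -- (b)
    ((∃ y₁ > (0 : ℝ),
        0 < ⨅ x, ∫⁻ y in Set.Ioi y₁, ENNReal.ofReal y * ν₁ x (Set.Ioi y)) →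
      (∃ ρ > (0 : ℝ),
        ∫⁻ r in Set.Ioi ρ,
          (⨅ x, ∫⁻ y in Set.Ioc (0 : ℝ) r, ENNReal.ofReal y * ν₂ x (Set.Ioi y))⁻¹ < ∞) →
      ∃ ρ₀ > (0 : ℝ), ∀ ρ : ℝ, ρ₀ ≤ ρ →
        ∫⁻ r in Set.Ioi ρ,
          (⨅ x, ∫⁻ y in Set.Ioc (0 : ℝ) r, ENNReal.ofReal y * ν₁ x (Set.Ioi y))⁻¹ < ∞) := by
  set C := ENNReal.ofReal (max 1 (y₀ ^ 2)) * ⨆ x, levyIntegral (ν₂ x)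
  have hC : C ≠ ∞ := ENNReal.mul_ne_top ENNReal.ofReal_ne_top hν₂.ne
  have hcomp : ∀ x r, tailIntegral (ν₂ x) r ≤ C + tailIntegral (ν₁ x) r := fun x r =>
    (tailIntegral.le_add_of_measure_Ioi_le hy₀.le (htail x) r).trans <| add_le_add
      ((tailIntegral.le_levyIntegral _ hy₀.le).trans
        (mul_le_mul_right (le_iSup (fun x => levyIntegral (ν₂ x)) x) _))
      le_rfl
  refine ⟨fun ρ hρ hdiv => ?_, fun _ ⟨ρ, hρ, hconv⟩ => ?_⟩
  · refine lintegral_Ioi_inv_eq_top_of_le_add (I₁ := fun r => ⨆ x, tailIntegral (ν₁ x) r)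
      (I₂ := fun r => ⨆ x, tailIntegral (ν₂ x) r) hC
      (fun _ _ h => iSup_mono fun x => tailIntegral.monotone _ h) (fun h₀ r => ?_)
      (fun r => iSup_le fun x => (hcomp x r).trans (add_le_add le_rfl (le_iSup_of_le x le_rfl)))
      hdiv
    simp only [ENNReal.iSup_eq_zero] at h₀ ⊢
    exact fun x => congrFun (tailIntegral.eq_zero_of_apply_eq_zero _ hρ (h₀ x)) r
  · exact exists_lintegral_Ioi_inv_lt_top_of_le_add (I₁ := fun r => ⨅ x, tailIntegral (ν₁ x) r)
      (I₂ := fun r => ⨅ x, tailIntegral (ν₂ x) r) hC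
      (fun _ _ h => iInf_mono fun x => tailIntegral.monotone _ h)
      (fun r => (iInf_mono fun x => hcomp x r).trans ENNReal.add_iInf.symm.le) hρ hconv
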